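/- Any perfectly reliable and perfectly secret message transmission protocol from Alice to Bob through channels observed by an eavesdropper satisfies H(S) ≤ min over eavesdropper views z of I(X; Y | Z = z), where X is Alice's view, Y is Bob's view, and S → X → Y → Ŝ forms a Markov chain. -/

import Mathlib

open scoped BigOperators Classical
noncomputable section

/-- Shannon entropy (in bits) of a mass function. -/
def ent {S : Type*} [Fintype S] (p : S → ℝ) : ℝ :=
  ∑ s, (if p s = 0 then 0 else -(p s * Real.logb 2 (p s)))

/-- Mutual information (in bits) `I(A;B) = H(A) + H(B) − H(A,B)` of a joint mass function. -/
def mi {A B : Type*} [Fintype A] [Fintype B] (p : A × B → ℝ) : ℝ :=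
  ent (fun a => ∑ b, p (a, b)) + ent (fun b => ∑ a, p (a, b)) - ent p

/-!
Perfect reliability and the Markov chain `S → X → Y` make `S` a function `g(X)` on the support:
if two outcomes of positive mass agree on `X` but not on `S`, the Markov identity at
`(S ω, X ω, Y ω')` has a vanishing left side, because reliability forces `S = d(Y) = d(Y ω')`
there, while its right side is positive. Conditioning on `Z = z` preserves `g(X) = S = d(Y)` on
the support. For any joint law `q` of `(A, B)` with `g(A) = d(B)` almost surely,
`I(A;B) - H(g(A))` is the divergence of `q` from `r(a,b) = q(a) · P(B = b | d(B) = g(a))`, a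
mass of total weight at most one, so Gibbs' inequality yields `H(g(A)) ≤ I(A;B)`. Perfect
secrecy turns `H(S | Z = z)` into `H(S)`.
-/

open Finset Real

section Pushforward

variable {α β γ : Type*} [Fintype α]

def pushforward (f : α → β) (p : α → ℝ) (b : β) : ℝ :=
  ∑ a, if f a = b then p a else 0

theorem pushforward_nonneg {p : α → ℝ} (hp : ∀ a, 0 ≤ p a) (f : α → β) (b : β) :
    0 ≤ pushforward f p b :=
  sum_nonneg fun a _ => ite_nonneg (hp a) le_rfl

theorem le_pushforward_apply {p : α → ℝ} (hp : ∀ a, 0 ≤ p a) (f : α → β) (a : α) :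
    p a ≤ pushforward f p (f a) := by
  simpa [pushforward] using single_le_sum (f := fun a' => if f a' = f a then p a' else 0)
    (fun a' _ => ite_nonneg (hp a') le_rfl) (mem_univ a)

theorem exists_of_pushforward_ne_zero {f : α → β} {p : α → ℝ} {b : β}
    (h : pushforward f p b ≠ 0) : ∃ a, f a = b ∧ p a ≠ 0 := by
  obtain ⟨a, -, ha⟩ := exists_ne_zero_of_sum_ne_zero h
  by_cases hfa : f a = b
  · exact ⟨a, hfa, by simpa [hfa] using ha⟩
  · simp [hfa] at ha

theorem pushforward_congr {f f' : α → β} {p : α → ℝ} (h : ∀ a, p a ≠ 0 → f a = f' a) :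
    pushforward f p = pushforward f' p := by
  ext b
  refine sum_congr rfl fun a _ => ?_
  by_cases hpa : p a = 0
  · simp [hpa]
  · rw [h a hpa]

theorem sum_pushforward_mul [Fintype β] (f : α → β) (p : α → ℝ) (φ : β → ℝ) :
    ∑ b, pushforward f p b * φ b = ∑ a, p a * φ (f a) := by
  simp only [pushforward, sum_mul]
  rw [sum_comm]
  simp [ite_mul]

theorem sum_pushforward [Fintype β] (f : α → β) (p : α → ℝ) :
    ∑ b, pushforward f p b = ∑ a, p a := by
  simpa using sum_pushforward_mul f p 1

theorem pushforward_comp [Fintype β] (g : β → γ) (f : α → β) (p : α → ℝ) :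
    pushforward (g ∘ f) p = pushforward g (pushforward f p) := by
  ext c
  have h := sum_pushforward_mul f p fun b => if g b = c then 1 else 0
  simp only [mul_ite, mul_one, mul_zero] at h
  exact h.symm

theorem pushforward_fst [Fintype β] (q : α × β → ℝ) :
    (fun a => ∑ b, q (a, b)) = pushforward Prod.fst q := by
  ext a
  simp [pushforward, Fintype.sum_prod_type_right]

theorem pushforward_snd [Fintype β] (q : α × β → ℝ) :
    (fun b => ∑ a, q (a, b)) = pushforward Prod.snd q := by
  ext b
  simp [pushforward, Fintype.sum_prod_type]

end Pushforward

theorem sum_mul_logb_div_nonpos {ι : Type*} [Fintype ι] {b : ℝ} (hb : 1 < b) {p r : ι → ℝ}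
    (hp : ∀ i, 0 ≤ p i) (hr : ∀ i, 0 ≤ r i) (hpr : ∀ i, 0 < p i → 0 < r i)
    (hsum : ∑ i, r i ≤ ∑ i, p i) :
    ∑ i, p i * logb b (r i / p i) ≤ 0 := by
  have hlogb : 0 < log b := log_pos hb
  have hterm : ∀ i, p i * logb b (r i / p i) ≤ (r i - p i) / log b := by
    intro i
    rcases (hp i).eq_or_lt with hpi | hpi
    · simp [← hpi, div_nonneg (hr i) hlogb.le]
    · rw [logb, mul_div_assoc', div_le_div_iff_of_pos_right hlogb]
      calc p i * log (r i / p i) ≤ p i * (r i / p i - 1) :=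
            mul_le_mul_of_nonneg_left (log_le_sub_one_of_pos (div_pos (hpr i hpi) hpi)) hpi.le
        _ = r i - p i := by field_simp
  calc ∑ i, p i * logb b (r i / p i) ≤ ∑ i, (r i - p i) / log b := sum_le_sum fun i _ => hterm i
    _ = (∑ i, r i - ∑ i, p i) / log b := by rw [← sum_div, sum_sub_distrib]
    _ ≤ 0 := div_nonpos_of_nonpos_of_nonneg (by linarith) hlogb.le

theorem ent_eq_neg_sum {α : Type*} [Fintype α] (p : α → ℝ) :
    ent p = -∑ a, p a * logb 2 (p a) := by
  rw [ent, ← sum_neg_distrib]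
  refine sum_congr rfl fun a _ => ?_
  by_cases h : p a = 0 <;> simp [h]

theorem ent_pushforward {α β : Type*} [Fintype α] [Fintype β] (f : α → β) (p : α → ℝ) :
    ent (pushforward f p) = -∑ a, p a * logb 2 (pushforward f p (f a)) := by
  rw [ent_eq_neg_sum, sum_pushforward_mul]

theorem mi_eq_sum {α β : Type*} [Fintype α] [Fintype β] (q : α × β → ℝ) :
    mi q = ∑ ab, q ab * logb 2 (q ab) - ∑ ab, q ab * logb 2 (pushforward Prod.fst q ab.1)
      - ∑ ab, q ab * logb 2 (pushforward Prod.snd q ab.2) := by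
  rw [mi, pushforward_fst, pushforward_snd, ent_pushforward, ent_pushforward, ent_eq_neg_sum]
  ring

section Conditioning

variable {Ω β γ : Type*} [Fintype Ω]

def condMass (μ : Ω → ℝ) (Z : Ω → γ) (z : γ) (ω : Ω) : ℝ :=
  (if Z ω = z then μ ω else 0) / pushforward Z μ z

theorem condMass_nonneg {μ : Ω → ℝ} (hμ : ∀ ω, 0 ≤ μ ω) (Z : Ω → γ) (z : γ) (ω : Ω) :
    0 ≤ condMass μ Z z ω :=
  div_nonneg (ite_nonneg (hμ ω) le_rfl) (pushforward_nonneg hμ Z z)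

theorem sum_condMass_le_one (μ : Ω → ℝ) (Z : Ω → γ) (z : γ) :
    ∑ ω, condMass μ Z z ω ≤ 1 := by
  simp only [condMass, ← sum_div]
  exact div_self_le_one _

theorem pos_of_condMass_ne_zero {μ : Ω → ℝ} (hμ : ∀ ω, 0 ≤ μ ω) {Z : Ω → γ} {z : γ} {ω : Ω}
    (h : condMass μ Z z ω ≠ 0) : 0 < μ ω := by
  refine (hμ ω).lt_of_ne' fun hω => h ?_
  simp [condMass, hω]

theorem pushforward_condMass (μ : Ω → ℝ) (Z : Ω → γ) (z : γ) (f : Ω → β) (b : β) :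
    pushforward f (condMass μ Z z) b
      = (∑ ω, if f ω = b ∧ Z ω = z then μ ω else 0) / pushforward Z μ z := by
  simp only [pushforward, condMass, sum_div]
  refine sum_congr rfl fun ω _ => ?_
  by_cases hf : f ω = b <;> by_cases hZ : Z ω = z <;> simp [hf, hZ]

end Conditioning

theorem ent_pushforward_le_mi {α β γ : Type*} [Fintype α] [Fintype β] [Fintype γ]
    (q : α × β → ℝ) (hq0 : ∀ ab, 0 ≤ q ab) (g : α → γ) (d : β → γ)
    (hgd : ∀ a b, q (a, b) ≠ 0 → g a = d b) :
    ent (pushforward (g ∘ Prod.fst) q) ≤ mi q := by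
  set qA := pushforward Prod.fst q
  set qB := pushforward Prod.snd q
  set pT := pushforward (g ∘ Prod.fst) q
  have hpT : pT = pushforward d qB := by
    rw [← pushforward_comp]
    exact pushforward_congr fun ab hab => hgd ab.1 ab.2 hab
  set r : α × β → ℝ := fun ab => qA ab.1 * condMass qB d (g ab.1) ab.2
  have hr0 : ∀ ab, 0 ≤ r ab := fun ab =>
    mul_nonneg (pushforward_nonneg hq0 _ _) (condMass_nonneg (pushforward_nonneg hq0 _) _ _ _)
  have hsum : ∑ ab, r ab ≤ ∑ ab, q ab :=
    calc ∑ ab, r ab = ∑ a, qA a * ∑ b, condMass qB d (g a) b := by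
          simp only [r, Fintype.sum_prod_type, mul_sum]
      _ ≤ ∑ a, qA a := sum_le_sum fun a _ => mul_le_of_le_one_right (pushforward_nonneg hq0 _ _)
          (sum_condMass_le_one _ _ _)
      _ = ∑ ab, q ab := sum_pushforward _ _
  have hpos : ∀ ab, 0 < q ab → 0 < qA ab.1 ∧ 0 < qB ab.2 ∧ 0 < pT (g ab.1) := fun ab h =>
    ⟨h.trans_le (le_pushforward_apply hq0 _ ab), h.trans_le (le_pushforward_apply hq0 _ ab),
      h.trans_le (le_pushforward_apply hq0 _ ab)⟩
  have hr : ∀ ab, 0 < q ab → r ab = qA ab.1 * (qB ab.2 / pT (g ab.1)) := fun ab h => by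
    simp only [r, condMass, if_pos (hgd ab.1 ab.2 h.ne').symm, hpT]
  have hterm : ∀ ab, q ab * logb 2 (r ab / q ab) = q ab * logb 2 (qA ab.1)
      + q ab * logb 2 (qB ab.2) - q ab * logb 2 (q ab) - q ab * logb 2 (pT (g ab.1)) := by
    intro ab
    rcases (hq0 ab).eq_or_lt with h | h
    · simp [← h]
    obtain ⟨hA, hB, hT⟩ := hpos ab h
    rw [hr ab h, logb_div (by positivity) h.ne', logb_mul hA.ne' (by positivity),
      logb_div hB.ne' hT.ne']
    ring
  have gibbs := sum_mul_logb_div_nonpos one_lt_two hq0 hr0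
    (fun ab h => (hr ab h).symm ▸ by obtain ⟨hA, hB, hT⟩ := hpos ab h; positivity) hsum
  simp only [hterm, sum_sub_distrib, sum_add_distrib] at gibbs
  rw [mi_eq_sum, ent_pushforward]
  simp only [Function.comp_apply]
  linarith

theorem sum_ite_pos {Ω : Type*} [Fintype Ω] {μ : Ω → ℝ} (hμ : ∀ ω, 0 ≤ μ ω)
    {P : Ω → Prop} [DecidablePred P] {ω : Ω} (hP : P ω) (hω : 0 < μ ω) :
    0 < ∑ ω, if P ω then μ ω else 0 :=
  sum_pos' (fun ω _ => ite_nonneg (hμ ω) le_rfl) ⟨ω, mem_univ ω, by simpa [hP] using hω⟩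

theorem factorsThrough_of_markov_of_reliable {Ω 𝒮 𝒳 𝒴 : Type*} [Fintype Ω]
    {μ : Ω → ℝ} (hμ0 : ∀ ω, 0 ≤ μ ω) {S : Ω → 𝒮} {X : Ω → 𝒳} {Y : Ω → 𝒴} {d : 𝒴 → 𝒮}
    (hmarkov : ∀ (s : 𝒮) (x : 𝒳) (y : 𝒴),
      (∑ ω, if S ω = s ∧ X ω = x ∧ Y ω = y then μ ω else 0) *
          (∑ ω, if X ω = x then μ ω else 0)
        = (∑ ω, if S ω = s ∧ X ω = x then μ ω else 0) *
            (∑ ω, if X ω = x ∧ Y ω = y then μ ω else 0))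
    (hrel : ∀ ω, 0 < μ ω → d (Y ω) = S ω) :
    Function.FactorsThrough (fun ω : {ω // 0 < μ ω} => S ω) (fun ω => X ω) := by
  rintro ⟨ω, hω⟩ ⟨ω', hω'⟩ (hX : X ω = X ω')
  show S ω = S ω'
  by_contra hS
  have hzero : (∑ η, if S η = S ω ∧ X η = X ω ∧ Y η = Y ω' then μ η else 0) = 0 := by
    refine sum_eq_zero fun η _ => ite_eq_right_iff.2 fun ⟨hSη, _, hYη⟩ => ?_
    by_contra hη
    exact hS (by rw [← hSη, ← hrel η ((hμ0 η).lt_of_ne' hη), hYη, hrel ω' hω'])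
  have h := hmarkov (S ω) (X ω) (Y ω')
  rw [hzero, zero_mul] at h
  exact (mul_pos (sum_ite_pos hμ0 ⟨rfl, rfl⟩ hω) (sum_ite_pos hμ0 ⟨hX.symm, rfl⟩ hω')).ne h

theorem perfect_pmt_entropy_bound_general
    {Ω 𝒮 𝒳 𝒴 𝒵 : Type*} [Fintype Ω] [Fintype 𝒮] [Fintype 𝒳] [Fintype 𝒴]
    (μ : Ω → ℝ) (hμ0 : ∀ ω, 0 ≤ μ ω)
    (S : Ω → 𝒮) (X : Ω → 𝒳) (Y : Ω → 𝒴) (Zf : Ω → 𝒵) (d : 𝒴 → 𝒮)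
    -- Markov chain S → X → Y
    (hmarkov : ∀ (s : 𝒮) (x : 𝒳) (y : 𝒴),
      (∑ ω, if S ω = s ∧ X ω = x ∧ Y ω = y then μ ω else 0) *
          (∑ ω, if X ω = x then μ ω else 0)
        = (∑ ω, if S ω = s ∧ X ω = x then μ ω else 0) *
            (∑ ω, if X ω = x ∧ Y ω = y then μ ω else 0))
    -- perfect reliability: Ŝ = d(Y) = S
    (hrel : ∀ ω, 0 < μ ω → d (Y ω) = S ω)
    -- perfect secrecy: H(S | Z = z) = H(S) for every view z of positive probability
    (hsec : ∀ z : 𝒵, 0 < (∑ ω, if Zf ω = z then μ ω else 0) →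
      ent (fun s => (∑ ω, if S ω = s ∧ Zf ω = z then μ ω else 0) /
            (∑ ω, if Zf ω = z then μ ω else 0))
        = ent (fun s => ∑ ω, if S ω = s then μ ω else 0)) :
    ∀ z : 𝒵, 0 < (∑ ω, if Zf ω = z then μ ω else 0) →
      ent (fun s => ∑ ω, if S ω = s then μ ω else 0) ≤
        mi (fun xy : 𝒳 × 𝒴 =>
          (∑ ω, if X ω = xy.1 ∧ Y ω = xy.2 ∧ Zf ω = z then μ ω else 0) /
            (∑ ω, if Zf ω = z then μ ω else 0)) := by
  intro z hz
  obtain ⟨ω₀, -⟩ := exists_ne_zero_of_sum_ne_zero hz.ne'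
  set ν := condMass μ Zf z
  have hμν : ∀ ω, ν ω ≠ 0 → 0 < μ ω := fun ω => pos_of_condMass_ne_zero hμ0
  set g := Function.extend (fun ω : {ω // 0 < μ ω} => X ω) (fun ω => S ω) (fun _ => S ω₀)
  have hg : ∀ ω, ν ω ≠ 0 → S ω = g (X ω) := fun ω hω =>
    ((factorsThrough_of_markov_of_reliable hμ0 hmarkov hrel).extend_apply _
      ⟨ω, hμν ω hω⟩).symm
  have hgd : ∀ x y, pushforward (fun ω => (X ω, Y ω)) ν (x, y) ≠ 0 → g x = d y := by
    intro x y hxy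
    obtain ⟨ω, hXY, hω⟩ := exists_of_pushforward_ne_zero hxy
    obtain ⟨rfl, rfl⟩ := Prod.mk.inj hXY
    rw [← hg ω hω, hrel ω (hμν ω hω)]
  have key := ent_pushforward_le_mi _ (pushforward_nonneg (condMass_nonneg hμ0 Zf z) _) g d hgd
  have hS : pushforward S ν = pushforward ((g ∘ Prod.fst) ∘ fun ω => (X ω, Y ω)) ν :=
    pushforward_congr hg
  rw [← pushforward_comp, ← hS] at key
  rw [← hsec z hz]
  convert key using 2
  · ext s
    exact (pushforward_condMass μ Zf z S s).symm
  · ext ⟨x, y⟩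
    simp only [pushforward_condMass, Prod.mk.injEq, and_assoc]
    rfl

/-- **Perfect secrecy and perfect reliability bound the message entropy by conditional mutual
information.**  Let `S` be the message, `X` Alice's view, `Y` Bob's view, `Z` Eve's view, and
`Ŝ = d(Y)` Bob's estimate, with the Markov chain `S → X → Y → Ŝ`.  Perfect secrecy:
`H(S | Z = z) = H(S)` for every view `z` of positive probability.  Perfect reliability:
`Ŝ = S` on the support.  Then `H(S) ≤ I(X; Y | Z = z)` for every view `z` of positive
probability, i.e. `H(S) ≤ min_z I(X; Y | Z = z)`. -/
theorem perfect_pmt_entropy_bound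
    {Ω 𝒮 𝒳 𝒴 𝒵 : Type*} [Fintype Ω] [Fintype 𝒮] [Fintype 𝒳] [Fintype 𝒴] [Fintype 𝒵]
    (μ : Ω → ℝ) (hμ0 : ∀ ω, 0 ≤ μ ω) (hμ1 : ∑ ω, μ ω = 1)
    (S : Ω → 𝒮) (X : Ω → 𝒳) (Y : Ω → 𝒴) (Zf : Ω → 𝒵) (d : 𝒴 → 𝒮)
    -- Markov chain S → X → Y
    (hmarkov : ∀ (s : 𝒮) (x : 𝒳) (y : 𝒴),
      (∑ ω, if S ω = s ∧ X ω = x ∧ Y ω = y then μ ω else 0) *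
          (∑ ω, if X ω = x then μ ω else 0)
        = (∑ ω, if S ω = s ∧ X ω = x then μ ω else 0) *
            (∑ ω, if X ω = x ∧ Y ω = y then μ ω else 0))
    -- perfect reliability: Ŝ = d(Y) = S
    (hrel : ∀ ω, 0 < μ ω → d (Y ω) = S ω)
    -- perfect secrecy: H(S | Z = z) = H(S) for every view z of positive probability
    (hsec : ∀ z : 𝒵, 0 < (∑ ω, if Zf ω = z then μ ω else 0) →
      ent (fun s => (∑ ω, if S ω = s ∧ Zf ω = z then μ ω else 0) /
            (∑ ω, if Zf ω = z then μ ω else 0))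
        = ent (fun s => ∑ ω, if S ω = s then μ ω else 0)) :
    ∀ z : 𝒵, 0 < (∑ ω, if Zf ω = z then μ ω else 0) →
      ent (fun s => ∑ ω, if S ω = s then μ ω else 0) ≤
        mi (fun xy : 𝒳 × 𝒴 =>
          (∑ ω, if X ω = xy.1 ∧ Y ω = xy.2 ∧ Zf ω = z then μ ω else 0) /
            (∑ ω, if Zf ω = z then μ ω else 0)) :=
  perfect_pmt_entropy_bound_general μ hμ0 S X Y Zf d hmarkov hrel hsec
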